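/- arXiv:1901.07158 — 5 statements merged into one kernel-verified Lean document; each statement's English description precedes it below -/
import Mathlib

section
/- Let R be a unital ring, let M₁ ⊆ M₂ and M₃ ⊆ M₄ be left R-modules such that M₂ and M₄ are projective and M₂/M₁ ≅ M₄/M₃. Then there is an isomorphism α : M₂ ⊕ M₄ → M₂ ⊕ M₄ such that α maps M₁ ⊕ M₄ onto M₂ ⊕ M₃. -/
/-!
Using projectivity, lift `e ∘ π₁` to `f : M₂ → M₄` and `e⁻¹ ∘ π₃` to `g : M₄ → M₂`. The product
of the shears `(x, y) ↦ (x, y - f x)`, `(x, y) ↦ (x + g y, y)`, `(x, y) ↦ (x, y - f x)` is an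
automorphism of `M₂ × M₄` whose second coordinate is `-e (π₁ x)` modulo `N₃`; hence it lies in `N₃`
exactly when `x ∈ N₁`, i.e. the automorphism pulls `M₂ × N₃` back to `N₁ × M₄`.
-/

theorem Submodule.map_prod_top_eq_top_prod {R M N P Q : Type*} [Semiring R] [AddCommMonoid M]
    [Module R M] [AddCommMonoid N] [Module R N] [AddCommMonoid P] [Module R P] [AddCommMonoid Q]
    [Module R Q] (α : (M × N) ≃ₗ[R] (P × Q)) {A : Submodule R M} {B : Submodule R Q}
    (h : ∀ p, (α p).2 ∈ B ↔ p.1 ∈ A) :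
    (A.prod ⊤).map (α : (M × N) →ₗ[R] (P × Q)) = (⊤ : Submodule R P).prod B := by
  have hcomap : ((⊤ : Submodule R P).prod B).comap (α : (M × N) →ₗ[R] (P × Q)) = A.prod ⊤ := by
    ext p
    simp [h]
  rw [← hcomap, Submodule.map_comap_eq_of_surjective α.surjective]

namespace LinearEquiv

variable {R M N : Type*} [Ring R] [AddCommGroup M] [Module R M] [AddCommGroup N] [Module R N]

def lowerShear (h : M →ₗ[R] N) : (M × N) ≃ₗ[R] (M × N) :=
  (LinearEquiv.refl R M).skewProd (LinearEquiv.refl R N) h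

def upperShear (h : N →ₗ[R] M) : (M × N) ≃ₗ[R] (M × N) :=
  (prodComm R M N).trans ((lowerShear h).trans (prodComm R N M))

@[simp]
theorem lowerShear_apply (h : M →ₗ[R] N) (p : M × N) : lowerShear h p = (p.1, p.2 + h p.1) := rfl

@[simp]
theorem upperShear_apply (h : N →ₗ[R] M) (p : M × N) : upperShear h p = (p.1 + h p.2, p.2) := rfl

def schanuelAut (f : M →ₗ[R] N) (g : N →ₗ[R] M) : (M × N) ≃ₗ[R] (M × N) :=
  (lowerShear (-f)).trans ((upperShear g).trans (lowerShear (-f)))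

theorem schanuelAut_apply_snd (f : M →ₗ[R] N) (g : N →ₗ[R] M) (p : M × N) :
    (schanuelAut f g p).2 = p.2 - f p.1 - f (p.1 + g (p.2 - f p.1)) := by
  simp [schanuelAut, sub_eq_add_neg]

theorem mkQ_schanuelAut_snd {A : Submodule R M} {B : Submodule R N} (e : (M ⧸ A) ≃ₗ[R] (N ⧸ B))
    {f : M →ₗ[R] N} {g : N →ₗ[R] M} (hf : B.mkQ ∘ₗ f = e ∘ₗ A.mkQ)
    (hg : A.mkQ ∘ₗ g = e.symm ∘ₗ B.mkQ) (p : M × N) :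
    B.mkQ (schanuelAut f g p).2 = -e (A.mkQ p.1) := by
  have hf' (x : M) : B.mkQ (f x) = e (A.mkQ x) := LinearMap.congr_fun hf x
  have hg' (y : N) : A.mkQ (g y) = e.symm (B.mkQ y) := LinearMap.congr_fun hg y
  rw [schanuelAut_apply_snd]
  simp only [map_sub, map_add, hf', hg', LinearEquiv.apply_symm_apply]
  abel

end LinearEquiv

universe u

/-- strengthened Schanuel lemma. Let `R` be a unital ring, `M₂` and `M₄`
projective left `R`-modules, `N₁ ⊆ M₂` and `N₃ ⊆ M₄` submodules with `M₂/N₁ ≅ M₄/N₃`.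
Then there is an automorphism `α` of `M₂ ⊕ M₄` mapping `N₁ ⊕ M₄` onto `M₂ ⊕ N₃`. -/
theorem schanuel_strengthened (R : Type u) [Ring R]
    (M₂ M₄ : Type u) [AddCommGroup M₂] [Module R M₂] [AddCommGroup M₄] [Module R M₄]
    [Module.Projective R M₂] [Module.Projective R M₄]
    (N₁ : Submodule R M₂) (N₃ : Submodule R M₄)
    (e : (M₂ ⧸ N₁) ≃ₗ[R] (M₄ ⧸ N₃)) :
    ∃ α : (M₂ × M₄) ≃ₗ[R] (M₂ × M₄),
      (N₁.prod (⊤ : Submodule R M₄)).map (α : (M₂ × M₄) →ₗ[R] (M₂ × M₄)) =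
        (⊤ : Submodule R M₂).prod N₃ := by
  obtain ⟨f, hf⟩ := Module.projective_lifting_property N₃.mkQ (e ∘ₗ N₁.mkQ) N₃.mkQ_surjective
  obtain ⟨g, hg⟩ :=
    Module.projective_lifting_property N₁.mkQ (e.symm ∘ₗ N₃.mkQ) N₁.mkQ_surjective
  refine ⟨LinearEquiv.schanuelAut f g, Submodule.map_prod_top_eq_top_prod _ fun p => ?_⟩
  rw [← Submodule.Quotient.mk_eq_zero, ← Submodule.mkQ_apply,
    LinearEquiv.mkQ_schanuelAut_snd e hf hg, neg_eq_zero, LinearEquiv.map_eq_zero_iff,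
    Submodule.mkQ_apply, Submodule.Quotient.mk_eq_zero]
end

section
/- Let dim be a Sylvester module rank function for a unital ring R. Let M be a finitely generated R-module, written as M = P/N for some finitely generated projective R-module P and submodule N ⊆ P, and also as M = Q/N' for a finitely generated projective Q and N' ⊆ Q. Then inf over finitely generated submodules N₀ ⊆ N of dim(P/N₀) equals inf over finitely generated submodules N₀' ⊆ N' of dim(Q/N₀'). -/
/-!
Lift `e` and `e⁻¹` through the quotient maps, by projectivity, to `g : P → Q` and `f : Q → P`.
For a finitely generated `N₀' ≤ N'`, the submodule `K = f(N₀') + (f ∘ g - 1)(P)` of `N` is again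
finitely generated (as `P` is), and `f` induces a surjection `Q/N₀' → P/K` because
`p = f (g p) - (f ∘ g - 1) p`. Monotonicity of `dim` under surjections of finitely presented
modules gives `dim (P/K) ≤ dim (Q/N₀')`; by symmetry the two infima agree.
-/

universe u

open scoped NNReal ENNReal

/-- A Sylvester module rank function for a unital ring `R`: an `ℝ≥0`-valued function on
(finitely presented) left `R`-modules satisfying normalization, direct sum additivity and
the exactness inequalities. -/
structure SylvesterModuleRank (R : Type u) [Ring R] where
  d : ∀ (M : Type u) [AddCommGroup M] [Module R M], ℝ≥0
  iso_invariant : ∀ (M N : Type u) [AddCommGroup M] [Module R M] [AddCommGroup N] [Module R N],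
      Module.FinitePresentation R M → (M ≃ₗ[R] N) → d M = d N
  d_zero : d PUnit = 0
  d_ring : d R = 1
  d_prod : ∀ (M N : Type u) [AddCommGroup M] [Module R M] [AddCommGroup N] [Module R N],
      Module.FinitePresentation R M → Module.FinitePresentation R N →
      d (M × N) = d M + d N
  d_exact : ∀ (M₁ M₂ M₃ : Type u) [AddCommGroup M₁] [Module R M₁] [AddCommGroup M₂]
      [Module R M₂] [AddCommGroup M₃] [Module R M₃]
      (α : M₁ →ₗ[R] M₂) (β : M₂ →ₗ[R] M₃),
      Module.FinitePresentation R M₁ → Module.FinitePresentation R M₂ →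
      Module.FinitePresentation R M₃ →
      Function.Exact α β → Function.Surjective β →
      d M₃ ≤ d M₂ ∧ d M₂ ≤ d M₁ + d M₃

section

variable {R : Type u} [Ring R] {P Q : Type u} [AddCommGroup P] [Module R P]
  [AddCommGroup Q] [Module R Q]

theorem Submodule.finitePresentation_quotient [Module.FinitePresentation R P]
    {K : Submodule R P} (hK : K.FG) : Module.FinitePresentation R (P ⧸ K) :=
  Module.finitePresentation_of_surjective K.mkQ K.mkQ_surjective (by rwa [K.ker_mkQ])

theorem Submodule.map_le_of_mkQ_comp_eq {N : Submodule R P} {N' : Submodule R Q}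
    {f : Q →ₗ[R] P} {φ : (Q ⧸ N') →ₗ[R] (P ⧸ N)} (h : N.mkQ ∘ₗ f = φ ∘ₗ N'.mkQ) :
    N'.map f ≤ N := by
  rw [Submodule.map_le_iff_le_comap, ← N.ker_mkQ, ← LinearMap.ker_comp, h]
  simpa using LinearMap.ker_le_ker_comp N'.mkQ φ

theorem LinearMap.range_sup_range_comp_sub_id (f : Q →ₗ[R] P) (g : P →ₗ[R] Q) :
    range f ⊔ range (f ∘ₗ g - id) = ⊤ := by
  refine eq_top_iff.mpr fun p _ => ?_
  rw [← sub_sub_cancel (f (g p)) p]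
  exact sub_mem (Submodule.mem_sup_left ⟨g p, rfl⟩) (Submodule.mem_sup_right ⟨p, rfl⟩)

end

namespace SylvesterModuleRank

variable {R : Type u} [Ring R] (dim : SylvesterModuleRank R)

theorem d_le_of_surjective {M N : Type u} [AddCommGroup M] [Module R M] [AddCommGroup N]
    [Module R N] [Module.FinitePresentation R M] [Module.FinitePresentation R N]
    (f : M →ₗ[R] N) (hf : Function.Surjective f) : dim.d N ≤ dim.d M := by
  obtain ⟨n, s, hs⟩ := Submodule.fg_iff_exists_fin_generating_family.mp
    (Module.FinitePresentation.fg_ker f hf)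
  refine (dim.d_exact _ M N (Fintype.linearCombination R s) f inferInstance ‹_› ‹_› ?_ hf).1
  rw [LinearMap.exact_iff, Fintype.range_linearCombination, hs]

variable {P Q : Type u} [AddCommGroup P] [Module R P] [AddCommGroup Q] [Module R Q]

theorem d_quotient_le_of_map_le [Module.FinitePresentation R P] [Module.FinitePresentation R Q]
    {K : Submodule R P} {L : Submodule R Q} (hK : K.FG) (hL : L.FG) (f : Q →ₗ[R] P)
    (hLK : L.map f ≤ K) (hfK : LinearMap.range f ⊔ K = ⊤) :
    dim.d (P ⧸ K) ≤ dim.d (Q ⧸ L) := by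
  have := Submodule.finitePresentation_quotient hK
  have := Submodule.finitePresentation_quotient hL
  refine dim.d_le_of_surjective (L.mapQ K f (Submodule.map_le_iff_le_comap.mp hLK)) ?_
  rintro ⟨p⟩
  obtain ⟨_, ⟨q, rfl⟩, k, hk, hp⟩ := Submodule.mem_sup.mp (hfK ▸ Submodule.mem_top : p ∈ _)
  refine ⟨Submodule.Quotient.mk q, (Submodule.Quotient.eq K).mpr ?_⟩
  simpa [← hp] using K.neg_mem hk

variable [Module.Finite R P] [Module.Projective R P] [Module.Finite R Q] [Module.Projective R Q]
  {N : Submodule R P} {N' : Submodule R Q}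

theorem iInf_d_quotient_le_of_linearEquiv (e : (P ⧸ N) ≃ₗ[R] (Q ⧸ N')) :
    ⨅ (N₀ : {N₀ : Submodule R P // N₀.FG ∧ N₀ ≤ N}), (dim.d (P ⧸ N₀.1) : ℝ≥0∞) ≤
      ⨅ (N₀' : {N₀' : Submodule R Q // N₀'.FG ∧ N₀' ≤ N'}), (dim.d (Q ⧸ N₀'.1) : ℝ≥0∞) := by
  have := Module.finitePresentation_of_projective R P
  have := Module.finitePresentation_of_projective R Q
  obtain ⟨f, hf⟩ := Module.projective_lifting_property N.mkQ
    (e.symm.toLinearMap ∘ₗ N'.mkQ) N.mkQ_surjective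
  obtain ⟨g, hg⟩ := Module.projective_lifting_property N'.mkQ
    (e.toLinearMap ∘ₗ N.mkQ) N'.mkQ_surjective
  have hfg : LinearMap.range (f ∘ₗ g - LinearMap.id) ≤ N := by
    rw [← N.ker_mkQ, LinearMap.range_le_ker_iff, LinearMap.comp_sub, ← LinearMap.comp_assoc, hf,
      LinearMap.comp_assoc, hg, ← LinearMap.comp_assoc, e.symm_comp]
    simp
  refine le_iInf fun ⟨L, hL, hLN'⟩ => ?_
  set K := L.map f ⊔ LinearMap.range (f ∘ₗ g - LinearMap.id)
  have hK : K.FG := (hL.map f).sup (Submodule.fg_range _)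
  have hKN : K ≤ N :=
    sup_le ((Submodule.map_mono hLN').trans (Submodule.map_le_of_mkQ_comp_eq hf)) hfg
  have hfK : LinearMap.range f ⊔ K = ⊤ :=
    top_le_iff.mp (LinearMap.range_sup_range_comp_sub_id f g ▸ sup_le_sup_left le_sup_right _)
  exact iInf_le_of_le ⟨K, hK, hKN⟩
    (ENNReal.coe_le_coe.mpr (dim.d_quotient_le_of_map_le hK hL f le_sup_left hfK))

end SylvesterModuleRank

/-- Let `dim` be a Sylvester module rank function for a unital ring `R`,
and let a finitely generated `R`-module `M` be written both as `P/N` and as `Q/N'` with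
`P`, `Q` finitely generated projective. Then
`inf { dim (P/N₀) : N₀ ⊆ N finitely generated } = inf { dim (Q/N₀') : N₀' ⊆ N' f.g. }`,
so the extension of `dim` to finitely generated modules is well defined. -/
theorem sylvesterModuleRank_fg_extension_well_defined (R : Type u) [Ring R]
    (dim : SylvesterModuleRank R)
    (P Q : Type u) [AddCommGroup P] [Module R P] [AddCommGroup Q] [Module R Q]
    [Module.Finite R P] [Module.Projective R P] [Module.Finite R Q] [Module.Projective R Q]
    (N : Submodule R P) (N' : Submodule R Q)
    (e : (P ⧸ N) ≃ₗ[R] (Q ⧸ N')) :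
    ⨅ (N₀ : {N₀ : Submodule R P // N₀.FG ∧ N₀ ≤ N}),
        (dim.d (P ⧸ N₀.1) : ℝ≥0∞) =
      ⨅ (N₀' : {N₀' : Submodule R Q // N₀'.FG ∧ N₀' ≤ N'}),
        (dim.d (Q ⧸ N₀'.1) : ℝ≥0∞) :=
  le_antisymm (dim.iInf_d_quotient_le_of_linearEquiv e)
    (dim.iInf_d_quotient_le_of_linearEquiv e.symm)
end

section
/- Let dim(·|·) be a bivariant Sylvester module rank function for a unital ring R. Then for any left R-modules M₁ ⊆ M₂ ⊆ M₃, dim(M₂|M₃) = dim(M₁|M₃) + dim(M₂/M₁|M₃/M₁). -/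
universe u
open scoped NNReal ENNReal

/-- A bivariant Sylvester module rank function for a unital ring `R`: to each pair of left
`R`-modules `N ⊆ M` (encoded as a submodule `N` of a module `M`) it assigns a value
`d M N ∈ ℝ≥0∞`, thought of as `dim(N|M)`, satisfying isomorphism invariance, normalization,
direct sum additivity, the two continuity conditions, and additivity. -/
structure BivariantSylvesterRank (R : Type u) [Ring R] where
  d : ∀ (M : Type u) [AddCommGroup M] [Module R M], Submodule R M → ℝ≥0∞
  iso_invariant : ∀ (M N : Type u) [AddCommGroup M] [Module R M] [AddCommGroup N] [Module R N]
      (e : M ≃ₗ[R] N) (p : Submodule R M),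
      d M p = d N (p.map (e : M →ₗ[R] N))
  d_zero : d PUnit ⊤ = 0
  d_ring : d R ⊤ = 1
  d_prod : ∀ (M N : Type u) [AddCommGroup M] [Module R M] [AddCommGroup N] [Module R N]
      (p : Submodule R M) (q : Submodule R N),
      d (M × N) (p.prod q) = d M p + d N q
  continuity_sup : ∀ (M : Type u) [AddCommGroup M] [Module R M] (p : Submodule R M),
      d M p = ⨆ (p' : {p' : Submodule R M // p'.FG ∧ p' ≤ p}), d M p'.1
  continuity_inf : ∀ (M : Type u) [AddCommGroup M] [Module R M] (p : Submodule R M), p.FG →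
      d M p = ⨅ (q : {q : Submodule R M // q.FG ∧ p ≤ q}), d q.1 (p.comap q.1.subtype)
  additivity : ∀ (M : Type u) [AddCommGroup M] [Module R M] (p : Submodule R M),
      d M ⊤ = d M p + d (M ⧸ p) ⊤

/-! When the ambient module is finitely generated every value is finite (it is bounded by the
value on a free module `Rⁿ`, which is `n`), and the theorem follows from the additivity axiom
and the third isomorphism theorem by cancellation. The finite case also gives monotonicity
under linear maps, `dim(f S | N) ≤ dim(S | M)`: by the continuity axioms it reduces to a
quotient map `M → M/K` with `M` finitely generated, where it is the inequality
`dim(M/S) + dim(M/K) ≤ dim(M) + dim(M/(S + K))` read off the exact sequence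
`M → M/S ⊕ M/K → M/(S + K) → 0`. In general one approximates `N₁`, `N₂` and the ambient
modules by finitely generated submodules; the one delicate point is that `N₁` must be
exhausted from inside while `N₂/N₁` is controlled from outside, which works because the
error term `dim(N₁ ∩ Q | Q)` is finite for `Q` finitely generated and can be cancelled. -/

namespace Submodule

variable {R M N : Type*} [Ring R] [AddCommGroup M] [Module R M] [AddCommGroup N] [Module R N]

theorem exists_fg_le_map_eq (f : M →ₗ[R] N) {S : Submodule R M} {r : Submodule R N}
    (hr : r.FG) (hrS : r ≤ S.map f) : ∃ s : Submodule R M, s.FG ∧ s ≤ S ∧ s.map f = r := by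
  obtain ⟨T, rfl⟩ := hr
  have hT : (T : Set N) ⊆ f '' S := by
    rw [← Submodule.map_coe]; exact subset_span.trans hrS
  obtain ⟨t, htS, ht, htT⟩ :=
    Set.exists_subset_image_finite_and.1 ⟨(T : Set N), hT, T.finite_toSet, rfl⟩
  exact ⟨span R t, fg_span ht, span_le.2 htS, by rw [map_span, htT]⟩

theorem exists_fg_ge_map_eq {f : M →ₗ[R] N} (hf : Function.Surjective f) {p : Submodule R M}
    {r : Submodule R N} (hp : p.FG) (hr : r.FG) (hpr : p.map f ≤ r) :
    ∃ q : Submodule R M, q.FG ∧ p ≤ q ∧ q.map f = r := by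
  obtain ⟨s, hs, -, hsr⟩ := exists_fg_le_map_eq (S := ⊤) f hr
    (by rw [Submodule.map_top, LinearMap.range_eq_top.2 hf]; exact le_top)
  exact ⟨s ⊔ p, hs.sup hp, le_sup_right, by rw [map_sup, hsr, sup_eq_left.2 hpr]⟩

theorem map_submoduleMap_submoduleOf (f : M →ₗ[R] N) {S q : Submodule R M} (hSq : S ≤ q) :
    (S.submoduleOf q).map (f.submoduleMap q) = (S.map f).submoduleOf (q.map f) := by
  ext ⟨y, hy⟩
  simp only [submoduleOf, mem_map, mem_comap, subtype_apply, Subtype.ext_iff,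
    LinearMap.submoduleMap_coe_apply, Subtype.exists]
  constructor
  · rintro ⟨x, -, hx, rfl⟩; exact ⟨x, hx, rfl⟩
  · rintro ⟨x, hx, rfl⟩; exact ⟨x, hSq hx, hx, rfl⟩

theorem map_subtype_submoduleOf {p q : Submodule R M} (hpq : p ≤ q) :
    (p.submoduleOf q).map q.subtype = p := by
  rw [submoduleOf, map_comap_subtype, inf_of_le_right hpq]

theorem map_mapQ_map_mkQ_submoduleOf {p q n : Submodule R M} (hpq : p ≤ q) {b : Submodule R q}
    (hbn : b ≤ n.comap q.subtype) :
    ((p.submoduleOf q).map b.mkQ).map (b.mapQ n q.subtype hbn) = p.map n.mkQ := by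
  rw [← map_comp, mapQ_mkQ, map_comp, map_subtype_submoduleOf hpq]

theorem map_inclusion_submoduleOf {p W W' : Submodule R M} (hpW : p ≤ W) (hWW' : W ≤ W') :
    (p.submoduleOf W).map (inclusion hWW') = p.submoduleOf W' := by
  ext ⟨x, hx⟩
  simp only [submoduleOf, mem_map, mem_comap, subtype_apply, Subtype.exists]
  constructor
  · rintro ⟨y, hy, hyp, hyx⟩; cases hyx; exact hyp
  · intro hxp; exact ⟨x, hpW hxp, hxp, rfl⟩

theorem ker_submoduleMap (f : M →ₗ[R] N) (q : Submodule R M) :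
    LinearMap.ker (f.submoduleMap q) = (LinearMap.ker f).submoduleOf q := by
  ext x
  simp [submoduleOf, Subtype.ext_iff]

end Submodule

namespace BivariantSylvesterRank

open Submodule

variable {R : Type u} [Ring R] (dim : BivariantSylvesterRank R)
variable {M N : Type u} [AddCommGroup M] [Module R M] [AddCommGroup N] [Module R N]

theorem d_top_congr (e : M ≃ₗ[R] N) : dim.d M ⊤ = dim.d N ⊤ := by
  rw [dim.iso_invariant M N e ⊤, Submodule.map_top, LinearEquiv.range]

theorem d_mono {p p' : Submodule R M} (h : p ≤ p') : dim.d M p ≤ dim.d M p' := by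
  rw [dim.continuity_sup M p, dim.continuity_sup M p']
  exact iSup_le fun r => le_iSup_of_le ⟨r.1, r.2.1, r.2.2.trans h⟩ le_rfl

theorem d_quotient_top_le (p : Submodule R M) : dim.d (M ⧸ p) ⊤ ≤ dim.d M ⊤ := by
  rw [dim.additivity M p]
  exact le_add_self

theorem d_top_le_of_surjective {f : M →ₗ[R] N} (hf : Function.Surjective f) :
    dim.d N ⊤ ≤ dim.d M ⊤ := by
  rw [← dim.d_top_congr (f.quotKerEquivOfSurjective hf)]
  exact dim.d_quotient_top_le _

theorem d_pi_fin (n : ℕ) : dim.d (Fin n → R) ⊤ = n := by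
  induction n with
  | zero =>
    rw [dim.d_top_congr (LinearEquiv.ofSubsingleton _ PUnit.{u + 1}), dim.d_zero, Nat.cast_zero]
  | succ n ih =>
    rw [← dim.d_top_congr (Fin.consLinearEquiv R fun _ => R), ← prod_top, dim.d_prod, dim.d_ring,
      ih, Nat.cast_succ, add_comm]

theorem d_top_ne_top [Module.Finite R M] : dim.d M ⊤ ≠ ⊤ := by
  obtain ⟨n, f, hf⟩ := Module.Finite.exists_fin' R M
  exact ne_top_of_le_ne_top (by rw [dim.d_pi_fin]; exact ENNReal.natCast_ne_top n)
    (dim.d_top_le_of_surjective hf)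

theorem d_ne_top [Module.Finite R M] (p : Submodule R M) : dim.d M p ≠ ⊤ :=
  ne_top_of_le_ne_top dim.d_top_ne_top (dim.d_mono le_top)

theorem d_le_d_submoduleOf_of_fg {p W : Submodule R M} (hp : p.FG) (hW : W.FG) (hpW : p ≤ W) :
    dim.d M p ≤ dim.d W (p.submoduleOf W) := by
  rw [dim.continuity_inf M p hp]
  exact iInf_le (fun q : {q : Submodule R M // q.FG ∧ p ≤ q} => dim.d q (p.comap q.1.subtype))
    ⟨W, hW, hpW⟩

theorem d_quotient_add_d_quotient_le [Module.Finite R M] (S K : Submodule R M) :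
    dim.d (M ⧸ S) ⊤ + dim.d (M ⧸ K) ⊤ ≤ dim.d M ⊤ + dim.d (M ⧸ (S ⊔ K)) ⊤ := by
  set φ := S.mkQ.prod K.mkQ
  set Z := LinearMap.range φ
  have hZ : dim.d _ Z ≤ dim.d M ⊤ := by
    have hZfg : Z.FG := Module.Finite.iff_fg.1 (Module.Finite.range φ)
    calc dim.d _ Z ≤ dim.d Z ⊤ := by
          simpa only [submoduleOf_self] using dim.d_le_d_submoduleOf_of_fg hZfg hZfg le_rfl
      _ ≤ dim.d M ⊤ := dim.d_top_le_of_surjective φ.surjective_rangeRestrict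
  -- `x ↦ [(x mod S, 0)]` is onto the cokernel of `φ`, since `(y mod S, y mod K) = φ y`
  set g := Z.mkQ ∘ₗ LinearMap.inl R _ _ ∘ₗ S.mkQ
  have hg : S ⊔ K ≤ LinearMap.ker g := by
    refine sup_le (fun s hs => ?_) (fun k hk => ?_) <;> rw [LinearMap.mem_ker]
    · simp only [g, LinearMap.comp_apply, mkQ_apply, (Submodule.Quotient.mk_eq_zero S).2 hs,
        map_zero]
    · refine (Submodule.Quotient.mk_eq_zero Z).2 ⟨k, ?_⟩
      simp [φ, (Submodule.Quotient.mk_eq_zero K).2 hk]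
  have hsurj : Function.Surjective ((S ⊔ K).liftQ g hg) := by
    intro z
    obtain ⟨⟨a, b⟩, rfl⟩ := Z.mkQ_surjective z
    obtain ⟨x, rfl⟩ := S.mkQ_surjective a
    obtain ⟨y, rfl⟩ := K.mkQ_surjective b
    refine ⟨(S ⊔ K).mkQ (x - y), (Submodule.Quotient.eq Z).2 ⟨-y, ?_⟩⟩
    simp [φ]
  calc dim.d (M ⧸ S) ⊤ + dim.d (M ⧸ K) ⊤ = dim.d _ Z + dim.d (_ ⧸ Z) ⊤ := by
        rw [← dim.additivity, ← prod_top, dim.d_prod]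
    _ ≤ dim.d M ⊤ + dim.d (M ⧸ (S ⊔ K)) ⊤ := add_le_add hZ (dim.d_top_le_of_surjective hsurj)

theorem d_map_mkQ_le_of_finite [Module.Finite R M] (K S : Submodule R M) :
    dim.d (M ⧸ K) (S.map K.mkQ) ≤ dim.d M S := by
  have hK := dim.additivity (M ⧸ K) (S.map K.mkQ)
  rw [dim.d_top_congr (quotientQuotientEquivQuotientSup K S), sup_comm] at hK
  have hstar := dim.d_quotient_add_d_quotient_le S K
  rw [hK, dim.additivity M S] at hstar
  refine (ENNReal.add_le_add_iff_right (dim.d_top_ne_top (M := M ⧸ S))).1 <|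
    (ENNReal.add_le_add_iff_right (dim.d_top_ne_top (M := M ⧸ (S ⊔ K)))).1 ?_
  calc _ = dim.d (M ⧸ S) ⊤ + (dim.d (M ⧸ K) (S.map K.mkQ) + dim.d (M ⧸ (S ⊔ K)) ⊤) := by ring
    _ ≤ _ := hstar

theorem d_eq_d_add_d_map_mkQ_of_finite [Module.Finite R M] {A B : Submodule R M}
    (hAB : A ≤ B) :
    dim.d M B = dim.d M A + dim.d (M ⧸ A) (B.map A.mkQ) := by
  refine (ENNReal.add_left_inj (dim.d_top_ne_top (M := M ⧸ B))).1 ?_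
  rw [← dim.additivity, dim.additivity M A, dim.additivity (M ⧸ A) (B.map A.mkQ),
    dim.d_top_congr (quotientQuotientEquivQuotient A B hAB), add_assoc]


theorem d_map_eq_d_map_mkQ_ker {f : M →ₗ[R] N} (hf : Function.Surjective f)
    (S : Submodule R M) :
    dim.d N (S.map f) = dim.d (M ⧸ LinearMap.ker f) (S.map (LinearMap.ker f).mkQ) := by
  rw [dim.iso_invariant _ _ (f.quotKerEquivOfSurjective hf), ← Submodule.map_comp]
  rfl

theorem d_map_le_of_surjective [Module.Finite R M] {f : M →ₗ[R] N}
    (hf : Function.Surjective f) (S : Submodule R M) : dim.d N (S.map f) ≤ dim.d M S := by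
  rw [dim.d_map_eq_d_map_mkQ_ker hf]
  exact dim.d_map_mkQ_le_of_finite _ _

theorem d_map_le_of_fg (f : M →ₗ[R] N) {S : Submodule R M} (hS : S.FG) :
    dim.d N (S.map f) ≤ dim.d M S := by
  rw [dim.continuity_inf M S hS]
  refine le_iInf fun ⟨q, hq, hSq⟩ => ?_
  have := Module.Finite.iff_fg.2 hq
  calc dim.d N (S.map f) ≤ dim.d _ ((S.map f).submoduleOf (q.map f)) :=
        dim.d_le_d_submoduleOf_of_fg (hS.map f) (hq.map f) (map_mono hSq)
    _ = dim.d _ ((S.submoduleOf q).map (f.submoduleMap q)) := by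
        rw [map_submoduleMap_submoduleOf f hSq]
    _ ≤ dim.d q (S.submoduleOf q) :=
        dim.d_map_le_of_surjective (f.submoduleMap_surjective q) _

theorem d_map_le (f : M →ₗ[R] N) (S : Submodule R M) : dim.d N (S.map f) ≤ dim.d M S := by
  rw [dim.continuity_sup N]
  refine iSup_le fun ⟨r, hr, hrS⟩ => ?_
  obtain ⟨s, hs, hsS, rfl⟩ := exists_fg_le_map_eq f hr hrS
  exact (dim.d_map_le_of_fg f hs).trans (dim.d_mono hsS)

theorem d_le_d_submoduleOf {p W : Submodule R M} (hpW : p ≤ W) :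
    dim.d M p ≤ dim.d W (p.submoduleOf W) := by
  simpa only [map_subtype_submoduleOf hpW] using dim.d_map_le W.subtype (p.submoduleOf W)

theorem d_submoduleOf_le_of_le {p W W' : Submodule R M} (hpW : p ≤ W) (hWW' : W ≤ W') :
    dim.d W' (p.submoduleOf W') ≤ dim.d W (p.submoduleOf W) := by
  rw [← map_inclusion_submoduleOf hpW hWW']
  exact dim.d_map_le _ _

theorem d_submoduleOf_sup_eq {p q : Submodule R M} [Module.Finite R q] (hpq : p ≤ q)
    (K : Submodule R M) :
    dim.d q (p.submoduleOf q ⊔ K.submoduleOf q) =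
      dim.d q (K.submoduleOf q) + dim.d _ ((p.map K.mkQ).submoduleOf (q.map K.mkQ)) := by
  rw [dim.d_eq_d_add_d_map_mkQ_of_finite le_sup_right, Submodule.map_sup, mkQ_map_self,
    sup_bot_eq, ← map_submoduleMap_submoduleOf K.mkQ hpq,
    dim.d_map_eq_d_map_mkQ_ker (K.mkQ.submoduleMap_surjective q), ker_submoduleMap, ker_mkQ]

theorem d_le_d_add_d_map_mkQ_of_fg_of_fg {p K : Submodule R M} (hp : p.FG) (hK : K.FG) :
    dim.d M p ≤ dim.d M K + dim.d (M ⧸ K) (p.map K.mkQ) := by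
  rw [dim.continuity_inf M K hK, dim.continuity_inf _ _ (hp.map K.mkQ), ENNReal.iInf_add]
  refine le_iInf fun ⟨q₁, hq₁, hKq₁⟩ => ?_
  rw [ENNReal.add_iInf]
  refine le_iInf fun ⟨r, hr, hpr⟩ => ?_
  obtain ⟨q₂, hq₂, hpq₂, rfl⟩ := exists_fg_ge_map_eq K.mkQ_surjective hp hr hpr
  set q := q₁ ⊔ q₂
  have : Module.Finite R q := Module.Finite.iff_fg.2 (hq₁.sup hq₂)
  have hpq : p ≤ q := hpq₂.trans le_sup_right
  calc dim.d M p ≤ dim.d q (p.submoduleOf q) := dim.d_le_d_submoduleOf hpq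
    _ ≤ dim.d q (p.submoduleOf q ⊔ K.submoduleOf q) := dim.d_mono le_sup_left
    _ = dim.d q (K.submoduleOf q) + dim.d _ ((p.map K.mkQ).submoduleOf (q.map K.mkQ)) :=
        dim.d_submoduleOf_sup_eq hpq K
    _ ≤ dim.d q₁ (K.submoduleOf q₁) + dim.d _ ((p.map K.mkQ).submoduleOf (q₂.map K.mkQ)) :=
        add_le_add (dim.d_submoduleOf_le_of_le hKq₁ le_sup_left)
          (dim.d_submoduleOf_le_of_le hpr (map_mono le_sup_right))

theorem iInf_d_map_mkQ_le {p : Submodule R M} (hp : p.FG) (K : Submodule R M) :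
    ⨅ K' : {K' : Submodule R M // K'.FG ∧ K' ≤ K}, dim.d (M ⧸ K'.1) (p.map K'.1.mkQ) ≤
      dim.d (M ⧸ K) (p.map K.mkQ) := by
  set X := ⨅ K' : {K' : Submodule R M // K'.FG ∧ K' ≤ K}, dim.d (M ⧸ K'.1) (p.map K'.1.mkQ)
  rw [dim.continuity_inf _ _ (hp.map K.mkQ)]
  refine le_iInf fun ⟨r, hr, hpr⟩ => ?_
  obtain ⟨q, hq, hpq, rfl⟩ := exists_fg_ge_map_eq K.mkQ_surjective hp hr hpr
  have : Module.Finite R q := Module.Finite.iff_fg.2 hq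
  set B := K.submoduleOf q
  set T := dim.d _ ((p.map K.mkQ).submoduleOf (q.map K.mkQ))
  have hX : ∀ b : {b : Submodule R q // b.FG ∧ b ≤ B}, dim.d q b.1 + X ≤ dim.d q B + T := by
    rintro ⟨b, hb, hbB⟩
    let n : {K' : Submodule R M // K'.FG ∧ K' ≤ K} :=
      ⟨b.map q.subtype, hb.map _, map_le_iff_le_comap.2 hbB⟩
    calc dim.d q b + X ≤ dim.d q b + dim.d (M ⧸ n.1) (p.map n.1.mkQ) :=
          add_le_add_right (iInf_le (fun K' : {K' : Submodule R M // K'.FG ∧ K' ≤ K} =>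
            dim.d (M ⧸ K'.1) (p.map K'.1.mkQ)) n) _
      _ ≤ dim.d q b + dim.d (q ⧸ b) ((p.submoduleOf q).map b.mkQ) := by
          rw [← map_mapQ_map_mkQ_submoduleOf hpq (le_comap_map q.subtype b)]
          exact add_le_add_right (dim.d_map_le _ _) _
      _ = dim.d q (p.submoduleOf q ⊔ b) := by
          rw [dim.d_eq_d_add_d_map_mkQ_of_finite (le_sup_right : b ≤ _), Submodule.map_sup,
            mkQ_map_self, sup_bot_eq]
      _ ≤ dim.d q (p.submoduleOf q ⊔ B) := dim.d_mono (sup_le_sup_left hbB _)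
      _ = dim.d q B + T := dim.d_submoduleOf_sup_eq hpq K
  have : Nonempty {b : Submodule R q // b.FG ∧ b ≤ B} := ⟨⟨⊥, fg_bot, bot_le⟩⟩
  -- `dim(B | q)` is the supremum over the `b` and is finite, so it cancels
  refine (ENNReal.add_le_add_iff_left (dim.d_ne_top B)).1 ?_
  calc dim.d q B + X = ⨆ b : {b : Submodule R q // b.FG ∧ b ≤ B}, dim.d q b.1 + X := by
        rw [← ENNReal.iSup_add, ← dim.continuity_sup]
    _ ≤ dim.d q B + T := iSup_le hX

theorem d_le_d_add_d_map_mkQ_of_fg {p : Submodule R M} (hp : p.FG) (K : Submodule R M) :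
    dim.d M p ≤ dim.d M K + dim.d (M ⧸ K) (p.map K.mkQ) :=
  calc dim.d M p
      ≤ ⨅ K' : {K' : Submodule R M // K'.FG ∧ K' ≤ K},
          dim.d M K + dim.d (M ⧸ K'.1) (p.map K'.1.mkQ) :=
        le_iInf fun ⟨_, hK', hK'K⟩ =>
          (dim.d_le_d_add_d_map_mkQ_of_fg_of_fg hp hK').trans (add_le_add_left (dim.d_mono hK'K) _)
    _ = dim.d M K + ⨅ K' : {K' : Submodule R M // K'.FG ∧ K' ≤ K},
          dim.d (M ⧸ K'.1) (p.map K'.1.mkQ) := ENNReal.add_iInf.symm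
    _ ≤ dim.d M K + dim.d (M ⧸ K) (p.map K.mkQ) :=
        add_le_add_right (dim.iInf_d_map_mkQ_le hp K) _

theorem d_le_d_add_d_map_mkQ (p K : Submodule R M) :
    dim.d M p ≤ dim.d M K + dim.d (M ⧸ K) (p.map K.mkQ) := by
  rw [dim.continuity_sup M p]
  exact iSup_le fun ⟨p', hp', hp'p⟩ =>
    (dim.d_le_d_add_d_map_mkQ_of_fg hp' K).trans (add_le_add_right (dim.d_mono (map_mono hp'p)) _)

theorem d_add_d_map_mkQ_le_of_fg {p₁ p : Submodule R M} (hp : p.FG) (h : p₁ ≤ p) :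
    dim.d M p₁ + dim.d (M ⧸ p₁) (p.map p₁.mkQ) ≤ dim.d M p := by
  rw [dim.continuity_inf M p hp]
  refine le_iInf fun ⟨q, hq, hpq⟩ => ?_
  have : Module.Finite R q := Module.Finite.iff_fg.2 hq
  calc dim.d M p₁ + dim.d (M ⧸ p₁) (p.map p₁.mkQ)
      ≤ dim.d q (p₁.submoduleOf q) +
          dim.d (q ⧸ p₁.submoduleOf q) ((p.submoduleOf q).map (p₁.submoduleOf q).mkQ) := by
        rw [← map_mapQ_map_mkQ_submoduleOf hpq le_rfl]
        exact add_le_add (dim.d_le_d_submoduleOf (h.trans hpq)) (dim.d_map_le _ _)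
    _ = dim.d q (p.submoduleOf q) := (dim.d_eq_d_add_d_map_mkQ_of_finite (comap_mono h)).symm

theorem d_add_d_map_mkQ_le {N₁ N₂ : Submodule R M} (h : N₁ ≤ N₂) :
    dim.d M N₁ + dim.d (M ⧸ N₁) (N₂.map N₁.mkQ) ≤ dim.d M N₂ := by
  rw [dim.continuity_sup M N₁, dim.continuity_sup (M ⧸ N₁) (N₂.map N₁.mkQ)]
  have : Nonempty {p : Submodule R M // p.FG ∧ p ≤ N₁} := ⟨⟨⊥, fg_bot, bot_le⟩⟩
  have : Nonempty {r : Submodule R (M ⧸ N₁) // r.FG ∧ r ≤ N₂.map N₁.mkQ} :=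
    ⟨⟨⊥, fg_bot, bot_le⟩⟩
  refine ENNReal.iSup_add_iSup_le fun ⟨p₁, hp₁, hp₁N₁⟩ ⟨r, hr, hrN₂⟩ => ?_
  obtain ⟨p₂, hp₂, hp₂N₂, rfl⟩ := exists_fg_le_map_eq N₁.mkQ hr hrN₂
  have hp₁_map : p₁.map N₁.mkQ = ⊥ := LinearMap.le_ker_iff_map.1 (by rwa [ker_mkQ])
  have hfactor : ((p₁ ⊔ p₂).map p₁.mkQ).map (factor hp₁N₁) = p₂.map N₁.mkQ := by
    rw [← map_comp, factor_comp_mk, Submodule.map_sup, hp₁_map, bot_sup_eq]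
  calc dim.d M p₁ + dim.d (M ⧸ N₁) (p₂.map N₁.mkQ)
      ≤ dim.d M p₁ + dim.d (M ⧸ p₁) ((p₁ ⊔ p₂).map p₁.mkQ) :=
        add_le_add_right (hfactor ▸ dim.d_map_le _ _) _
    _ ≤ dim.d M (p₁ ⊔ p₂) := dim.d_add_d_map_mkQ_le_of_fg (hp₁.sup hp₂) le_sup_left
    _ ≤ dim.d M N₂ := dim.d_mono (sup_le (hp₁N₁.trans h) hp₂N₂)

end BivariantSylvesterRank

/-- full additivity. For a bivariant Sylvester module rank function
`dim(·|·)` for `R` and submodules `N₁ ⊆ N₂` of an `R`-module `M`,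
`dim(N₂|M) = dim(N₁|M) + dim(N₂/N₁ | M/N₁)`. -/
theorem bivariantSylvesterRank_additivity (R : Type u) [Ring R]
    (dim : BivariantSylvesterRank R)
    (M : Type u) [AddCommGroup M] [Module R M]
    (N₁ N₂ : Submodule R M) (h : N₁ ≤ N₂) :
    dim.d M N₂ = dim.d M N₁ + dim.d (M ⧸ N₁) (N₂.map N₁.mkQ) :=
  le_antisymm (dim.d_le_d_add_d_map_mkQ N₂ N₁) (dim.d_add_d_map_mkQ_le h)
end

section
/- Let dim(·|·) be a bivariant Sylvester module rank function for a unital ring R. For finitely generated R-modules M₁ ⊆ M₂ ⊆ M₃, one has dim(M₃) + dim(M₂/M₁) ≤ dim(M₂) + dim(M₃/M₁); equivalently dim(M₁|M₂) ≥ dim(M₁|M₃) where dim(N|M) := dim(M) − dim(M/N). -/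
universe u
open scoped NNReal ENNReal

/-- For a bivariant Sylvester module rank function for `R` and finitely
generated modules `M₁ ⊆ M₂ ⊆ M₃` (encoded as f.g. submodules `N₁ ≤ N₂` of a finitely
generated module `M₃`), one has `dim(M₃) + dim(M₂/M₁) ≤ dim(M₂) + dim(M₃/M₁)`;
equivalently `dim(M₁|M₂) ≥ dim(M₁|M₃)` where `dim(N|M) := dim(M) − dim(M/N)`. -/
theorem bivariantSylvesterRank_decreasing (R : Type u) [Ring R]
    (dim : BivariantSylvesterRank R)
    (M₃ : Type u) [AddCommGroup M₃] [Module R M₃] [Module.Finite R M₃]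
    (N₁ N₂ : Submodule R M₃) (hN₁ : N₁.FG) (hN₂ : N₂.FG) (h : N₁ ≤ N₂) :
    dim.d M₃ ⊤ + dim.d ↥(N₂.map N₁.mkQ) ⊤ ≤ dim.d ↥N₂ ⊤ + dim.d (M₃ ⧸ N₁) ⊤ := by
  set p : Submodule R ↥N₂ := N₁.comap N₂.subtype with hp
  have hstep : dim.d M₃ N₁ ≤ dim.d ↥N₂ p := by
    rw [dim.continuity_inf M₃ N₁ hN₁]
    exact iInf_le _ (⟨N₂, hN₂, h⟩ : {q : Submodule R M₃ // q.FG ∧ N₁ ≤ q})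
  have h3 := dim.additivity M₃ N₁
  have h2 := dim.additivity ↥N₂ p
  have hiso : dim.d (↥N₂ ⧸ p) ⊤ = dim.d ↥(N₂.map N₁.mkQ) ⊤ := by
    let f : ↥N₂ →ₗ[R] M₃ ⧸ N₁ := N₁.mkQ ∘ₗ N₂.subtype
    have hker : LinearMap.ker f = p := by
      rw [LinearMap.ker_comp, Submodule.ker_mkQ]
    have hrange : LinearMap.range f = N₂.map N₁.mkQ := by
      rw [LinearMap.range_comp, Submodule.range_subtype]
    let e : (↥N₂ ⧸ p) ≃ₗ[R] ↥(N₂.map N₁.mkQ) :=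
      (Submodule.quotEquivOfEq _ _ hker.symm).trans
        (f.quotKerEquivRange.trans (LinearEquiv.ofEq _ _ hrange))
    rw [dim.iso_invariant _ _ e ⊤, Submodule.map_top, LinearEquiv.range]
  rw [h3, h2, hiso]
  calc dim.d M₃ N₁ + dim.d (M₃ ⧸ N₁) ⊤ + dim.d ↥(N₂.map N₁.mkQ) ⊤
      ≤ dim.d ↥N₂ p + dim.d (M₃ ⧸ N₁) ⊤ + dim.d ↥(N₂.map N₁.mkQ) ⊤ := by gcongr
    _ = dim.d ↥N₂ p + dim.d ↥(N₂.map N₁.mkQ) ⊤ + dim.d (M₃ ⧸ N₁) ⊤ := by ring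
end

section
/- Let R be a von Neumann regular unital ring. Then every bivariant Sylvester module rank function for R gives rise to a normalized length function, i.e. dim(M):=dim(M|M) is a normalized length function for R. -/
universe u
open scoped NNReal ENNReal

/-- A normalized length function for a unital ring `R`: an `ℝ≥0∞`-valued function on all
left `R`-modules with `L(0)=0`, `L(R)=1`, continuity (sup over finitely generated
submodules) and additivity on short exact sequences. -/
def IsNormalizedLengthFunction (R : Type u) [Ring R]
    (L : ∀ (M : Type u) [AddCommGroup M] [Module R M], ℝ≥0∞) : Prop :=
  L PUnit = 0 ∧ L R = 1 ∧
    (∀ (M : Type u) [AddCommGroup M] [Module R M],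
      L M = ⨆ (p : {p : Submodule R M // p.FG}), L ↥p.1) ∧
    (∀ (M₁ M₂ M₃ : Type u) [AddCommGroup M₁] [Module R M₁] [AddCommGroup M₂] [Module R M₂]
      [AddCommGroup M₃] [Module R M₃] (f : M₁ →ₗ[R] M₂) (g : M₂ →ₗ[R] M₃),
      Function.Injective f → Function.Exact f g → Function.Surjective g →
      L M₂ = L M₁ + L M₃)

namespace SylvAux

variable {R : Type u} [Ring R]

/-- Every f.g. submodule admits a linear retraction of the ambient module onto it. -/
def AllRetract (R : Type u) [Ring R] (M : Type u) [AddCommGroup M] [Module R M] : Prop :=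
  ∀ N : Submodule R M, N.FG → ∃ r : M →ₗ[R] M, (∀ x ∈ N, r x = x) ∧ LinearMap.range r ≤ N

theorem idem_of_fg (hvnr : ∀ x : R, ∃ y : R, x * y * x = x) (N : Submodule R R) (hN : N.FG) :
    ∃ e ∈ N, ∀ x ∈ N, x * e = x := by
  refine Submodule.fg_induction (motive := fun N _ => ∃ e ∈ N, ∀ x ∈ N, x * e = x) ?_ ?_ N hN
  · intro x
    obtain ⟨y, hy⟩ := hvnr x
    refine ⟨y * x, Submodule.mem_span_singleton.mpr ⟨y, by rw [smul_eq_mul]⟩, ?_⟩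
    intro z hz
    obtain ⟨a, ha⟩ := Submodule.mem_span_singleton.mp hz
    rw [smul_eq_mul] at ha
    subst ha
    rw [mul_assoc, ← mul_assoc x y x, hy]
  · rintro N₁ N₂ - - ⟨e, heN, he⟩ ⟨f, hfN, hf⟩
    have hee : e * e = e := he e heN
    set f' := f - f * e with hf'def
    have hf'e : f' * e = 0 := by
      rw [hf'def, sub_mul, mul_assoc, hee, sub_self]
    obtain ⟨y, hy⟩ := hvnr f'
    set g := y * f' with hgdef
    have hf'g : f' * g = f' := by rw [hgdef, ← mul_assoc, hy]
    have hge : g * e = 0 := by rw [hgdef, mul_assoc, hf'e, mul_zero]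
    have hf'mem : f' ∈ N₁ ⊔ N₂ := by
      refine sub_mem (Submodule.mem_sup_right hfN) (Submodule.mem_sup_left ?_)
      simpa [smul_eq_mul] using N₁.smul_mem f heN
    have hgmem : g ∈ N₁ ⊔ N₂ := by
      simpa [hgdef, smul_eq_mul] using (N₁ ⊔ N₂).smul_mem y hf'mem
    refine ⟨e + g - e * g, ?_, ?_⟩
    · refine sub_mem (add_mem (Submodule.mem_sup_left heN) hgmem) ?_
      simpa [smul_eq_mul] using (N₁ ⊔ N₂).smul_mem e hgmem
    · have key1 : ∀ z : R, z * e = z → z * (e + g - e * g) = z := by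
        intro z hz
        have h1 : z * (e + g - e * g) = z * e + z * g - z * (e * g) := by
          rw [mul_sub, mul_add]
        rw [h1, ← mul_assoc z e g, hz]
        abel
      have key2 : ∀ z : R, z * g = z → z * e = 0 → z * (e + g - e * g) = z := by
        intro z hz1 hz2
        have h1 : z * (e + g - e * g) = z * e + z * g - z * (e * g) := by
          rw [mul_sub, mul_add]
        rw [h1, ← mul_assoc z e g, hz1, hz2, zero_mul, sub_zero, zero_add]
      intro x hx
      obtain ⟨x₁, hx₁, x₂, hx₂, rfl⟩ := Submodule.mem_sup.mp hx
      have hx2split : x₂ = x₂ * e + x₂ * f' := by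
        rw [hf'def, mul_sub, ← mul_assoc x₂ f e, hf x₂ hx₂]
        abel
      have hA : (x₂ * e) * (e + g - e * g) = x₂ * e :=
        key1 _ (by rw [mul_assoc, hee])
      have hB : (x₂ * f') * (e + g - e * g) = x₂ * f' :=
        key2 _ (by rw [mul_assoc, hf'g]) (by rw [mul_assoc, hf'e, mul_zero])
      have hsplit2 : x₂ * (e + g - e * g) = (x₂ * e) * (e + g - e * g) + (x₂ * f') * (e + g - e * g) := by
        rw [← add_mul, ← hx2split]
      rw [add_mul, hsplit2, key1 x₁ (he x₁ hx₁), hA, hB, ← hx2split]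

theorem allRetract_self (hvnr : ∀ x : R, ∃ y : R, x * y * x = x) : AllRetract R R := by
  intro N hN
  obtain ⟨e, heN, he⟩ := idem_of_fg hvnr N hN
  refine ⟨LinearMap.toSpanSingleton R R e, fun x hx => ?_, ?_⟩
  · simpa [LinearMap.toSpanSingleton_apply, smul_eq_mul] using he x hx
  · rintro x ⟨c, rfl⟩
    exact N.smul_mem c heN

theorem AllRetract.congr {M M' : Type u} [AddCommGroup M] [Module R M] [AddCommGroup M']
    [Module R M'] (hM : AllRetract R M) (eqv : M ≃ₗ[R] M') : AllRetract R M' := by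
  intro N hN
  obtain ⟨r, hr1, hr2⟩ := hM (N.map (eqv.symm : M' →ₗ[R] M)) (hN.map _)
  refine ⟨eqv.toLinearMap ∘ₗ r ∘ₗ eqv.symm.toLinearMap, ?_, ?_⟩
  · intro x hx
    have hmem : eqv.symm x ∈ N.map (eqv.symm : M' →ₗ[R] M) := Submodule.mem_map_of_mem hx
    simp [hr1 _ hmem]
  · rintro _ ⟨x, rfl⟩
    have hr : r (eqv.symm x) ∈ N.map (eqv.symm : M' →ₗ[R] M) := hr2 ⟨_, rfl⟩
    obtain ⟨y, hy, hyy⟩ := hr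
    show eqv (r (eqv.symm x)) ∈ N
    rw [← hyy, LinearEquiv.coe_coe, eqv.apply_symm_apply]
    exact hy

theorem allRetract_prod_right (hvnr : ∀ x : R, ∃ y : R, x * y * x = x) {M : Type u} [AddCommGroup M] [Module R M]
    (hM : AllRetract R M) : AllRetract R (M × R) := by
  intro N hN
  obtain ⟨e, heI, he⟩ := idem_of_fg hvnr (N.map (LinearMap.snd R M R)) (hN.map _)
  obtain ⟨u, huN, hu2⟩ := Submodule.mem_map.mp heI
  set t : (M × R) →ₗ[R] (M × R) :=
    (LinearMap.toSpanSingleton R (M × R) u) ∘ₗ (LinearMap.toSpanSingleton R R e) ∘ₗ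
      (LinearMap.snd R M R) with htdef
  have ht_apply : ∀ v : M × R, t v = (v.2 * e) • u := by
    intro v; simp [htdef, smul_eq_mul]
  have ht_mem : ∀ v : M × R, t v ∈ N := fun v => by
    rw [ht_apply]; exact N.smul_mem _ huN
  have ht2 : ∀ v ∈ N, (t v).2 = v.2 := by
    intro v hv
    have hv2 : v.2 ∈ N.map (LinearMap.snd R M R) := Submodule.mem_map_of_mem hv
    have hu2' : u.2 = e := hu2
    rw [ht_apply]
    show (v.2 * e) • u.2 = v.2
    rw [hu2', smul_eq_mul, mul_assoc, he e heI, he v.2 hv2]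
  set N₁' := N.map (LinearMap.id - t) with hN₁'def
  have hN₁'N : N₁' ≤ N := by
    rintro _ ⟨v, hv, rfl⟩
    exact sub_mem hv (ht_mem v)
  have hN₁'2 : ∀ x ∈ N₁', x.2 = 0 := by
    rintro _ ⟨v, hv, rfl⟩
    show (v - t v).2 = 0
    rw [Prod.snd_sub, ht2 v hv, sub_self]
  set N₁ := N₁'.map (LinearMap.fst R M R) with hN₁def
  have hinl : ∀ w ∈ N₁, ((w, 0) : M × R) ∈ N := by
    rintro _ ⟨x, hx, rfl⟩
    have h0 : x.2 = 0 := hN₁'2 x hx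
    have hx1 : (((LinearMap.fst R M R) x, 0) : M × R) = x := by
      rw [show (0:R) = x.2 from h0.symm]
      exact rfl
    rw [hx1]
    exact hN₁'N hx
  obtain ⟨r₁, hr₁id, hr₁range⟩ := hM N₁ ((hN.map _).map _)
  refine ⟨(LinearMap.inl R M R) ∘ₗ r₁ ∘ₗ (LinearMap.fst R M R) ∘ₗ (LinearMap.id - t) + t,
    ?_, ?_⟩
  · intro v hv
    have hmem' : v - t v ∈ N₁' := Submodule.mem_map_of_mem hv
    have hmem1 : (v - t v).1 ∈ N₁ := Submodule.mem_map_of_mem hmem'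
    show (LinearMap.inl R M R) (r₁ ((v - t v).1)) + t v = v
    rw [hr₁id _ hmem1]
    have : (LinearMap.inl R M R) ((v - t v).1) = v - t v := by
      ext
      · rfl
      · exact (hN₁'2 _ hmem').symm
    rw [this]
    abel
  · intro x hx
    obtain ⟨v, rfl⟩ := hx
    show (LinearMap.inl R M R) (r₁ ((v - t v).1)) + t v ∈ N
    refine add_mem ?_ (ht_mem v)
    have : r₁ ((v - t v).1) ∈ N₁ := hr₁range ⟨_, rfl⟩
    exact hinl _ this

/-- The product decomposition of a finite free module. -/
noncomputable def piProdEquiv (k m : ℕ) :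
    (Fin (k + m) → R) ≃ₗ[R] (Fin k → R) × (Fin m → R) :=
  (LinearEquiv.funCongrLeft R R finSumFinEquiv).trans
    (LinearEquiv.sumArrowLequivProdArrow (Fin k) (Fin m) R R)

theorem allRetract_pi (hvnr : ∀ x : R, ∃ y : R, x * y * x = x) : ∀ n : ℕ, AllRetract R (Fin n → R)
  | 0 => by
    intro N _
    haveI : Subsingleton (Fin 0 → R) := ⟨fun a b => funext fun i => i.elim0⟩
    refine ⟨LinearMap.id, fun x _ => rfl, fun x _ => ?_⟩
    have : x = 0 := Subsingleton.elim x 0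
    rw [this]; exact N.zero_mem
  | (n + 1) => by
    have h1 : AllRetract R ((Fin n → R) × R) :=
      allRetract_prod_right hvnr (allRetract_pi hvnr n)
    have e : ((Fin n → R) × R) ≃ₗ[R] (Fin (n + 1) → R) :=
      ((LinearEquiv.refl R (Fin n → R)).prodCongr
        (LinearEquiv.funUnique (Fin 1) R R).symm).trans (piProdEquiv n 1).symm
    exact h1.congr e

theorem allRetract_prodPi (hvnr : ∀ x : R, ∃ y : R, x * y * x = x) (k m : ℕ) : AllRetract R ((Fin k → R) × (Fin m → R)) :=
  (allRetract_pi hvnr (k + m)).congr (piProdEquiv k m)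

theorem isCompl_of_retract {M : Type u} [AddCommGroup M] [Module R M] {N : Submodule R M}
    {r : M →ₗ[R] M} (hr1 : ∀ x ∈ N, r x = x) (hr2 : LinearMap.range r ≤ N) :
    IsCompl N (LinearMap.ker r) := by
  constructor
  · rw [disjoint_iff]
    refine le_antisymm ?_ bot_le
    rintro x ⟨hx1, hx2⟩
    have : r x = 0 := hx2
    rw [hr1 x hx1] at this
    simpa using this
  · rw [codisjoint_iff]
    refine le_antisymm le_top ?_
    intro x _
    have h1 : r x ∈ N := hr2 ⟨x, rfl⟩
    have h2 : x - r x ∈ LinearMap.ker r := by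
      rw [LinearMap.mem_ker, map_sub, hr1 _ h1, sub_self]
    have : x = r x + (x - r x) := by abel
    rw [this]
    exact Submodule.add_mem_sup h1 h2

/-- Coherence: over a ring where all f.g. submodules of `F` are retracts,
the intersection of two f.g. submodules of a projective `F` is f.g. -/
theorem inf_fg {F : Type u} [AddCommGroup F] [Module R F] [Module.Projective R F]
    (hF : AllRetract R F) {A B : Submodule R F} (hA : A.FG) (hB : B.FG) : (A ⊓ B).FG := by
  classical
  obtain ⟨rB, hrB1, hrB2⟩ := hF B hB
  set φ : F →ₗ[R] F := LinearMap.id - rB with hφdef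
  have hkerφ : LinearMap.ker φ = B := by
    ext x
    constructor
    · intro hx
      have : x - rB x = 0 := hx
      have hx' : x = rB x := by rwa [sub_eq_zero] at this
      rw [hx']
      exact hrB2 ⟨x, rfl⟩
    · intro hx
      show x - rB x = 0
      rw [hrB1 x hx, sub_self]
  set J := A.map φ with hJdef
  have hJfg : J.FG := hA.map _
  obtain ⟨rJ, hrJ1, hrJ2⟩ := hF J hJfg
  haveI : Module.Projective R ↥J := by
    refine Module.Projective.of_split J.subtype (LinearMap.codRestrict J rJ
      (fun c => hrJ2 ⟨c, rfl⟩)) ?_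
    apply LinearMap.ext
    intro x
    refine Subtype.ext ?_
    show rJ ↑x = ↑x
    exact hrJ1 _ x.2
  haveI : Module.Finite R ↥A := Module.Finite.iff_fg.mpr hA
  set ψ : ↥A →ₗ[R] ↥J := LinearMap.codRestrict J (φ ∘ₗ A.subtype)
    (fun c => Submodule.mem_map_of_mem c.2) with hψdef
  have hψsurj : Function.Surjective ψ := by
    rintro ⟨_, ⟨a, ha, rfl⟩⟩
    exact ⟨⟨a, ha⟩, rfl⟩
  obtain ⟨σ, hσ⟩ := Module.projective_lifting_property ψ LinearMap.id hψsurj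
  have hkerψ : LinearMap.ker ψ = Submodule.comap A.subtype B := by
    rw [hψdef, LinearMap.ker_codRestrict, LinearMap.ker_comp, hkerφ]
  have hkerrange : LinearMap.ker ψ = LinearMap.range (LinearMap.id - σ ∘ₗ ψ) := by
    ext x
    constructor
    · intro hx
      refine ⟨x, ?_⟩
      show x - σ (ψ x) = x
      rw [show ψ x = 0 from hx, map_zero, sub_zero]
    · rintro ⟨y, rfl⟩
      show ψ (y - σ (ψ y)) = 0
      rw [map_sub]
      have : ψ (σ (ψ y)) = ψ y := by
        have := congrArg (fun f => f (ψ y)) (congrArg DFunLike.coe hσ)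
        simpa using this
      rw [this, sub_self]
  have hkerfg : (LinearMap.ker ψ).FG := by
    rw [hkerrange, ← Submodule.map_top]
    exact Submodule.FG.map _ (Module.finite_def.mp inferInstance)
  have : A ⊓ B = Submodule.map A.subtype (Submodule.comap A.subtype B) :=
    (Submodule.map_comap_subtype _ _).symm
  rw [this, ← hkerψ]
  exact hkerfg.map _

end SylvAux

namespace SylvAux

variable {R : Type u} [Ring R] (D : BivariantSylvesterRank R)

theorem d_iso {M N : Type u} [AddCommGroup M] [Module R M] [AddCommGroup N] [Module R N]
    (e : M ≃ₗ[R] N) : D.d M ⊤ = D.d N ⊤ := by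
  rw [D.iso_invariant M N e ⊤]
  congr 1
  rw [Submodule.map_top, LinearEquiv.range]

theorem L_subsingleton {M : Type u} [AddCommGroup M] [Module R M] [Subsingleton M] :
    D.d M ⊤ = 0 := by
  have e : PUnit.{u+1} ≃ₗ[R] M :=
    LinearEquiv.ofLinear (0 : PUnit.{u+1} →ₗ[R] M) (0 : M →ₗ[R] PUnit.{u+1})
      (LinearMap.ext fun x => Subsingleton.elim _ _) (LinearMap.ext fun x => Subsingleton.elim _ _)
  rw [← d_iso D e]
  exact D.d_zero

theorem d_mono {M : Type u} [AddCommGroup M] [Module R M] (p p' : Submodule R M) (h : p ≤ p') :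
    D.d M p ≤ D.d M p' := by
  rw [D.continuity_sup M p, D.continuity_sup M p']
  exact iSup_le fun A => le_iSup_of_le ⟨A.1, A.2.1, A.2.2.trans h⟩ le_rfl

theorem d_bot (M : Type u) [AddCommGroup M] [Module R M] : D.d M ⊥ = 0 := by
  have h := D.continuity_inf M ⊥ Submodule.fg_bot
  have hle : D.d M ⊥ ≤
      D.d ↥(⊥ : Submodule R M) ((⊥ : Submodule R M).comap (⊥ : Submodule R M).subtype) := by
    rw [h]
    exact iInf_le _ (⟨⊥, Submodule.fg_bot, le_rfl⟩ :
      {q : Submodule R M // q.FG ∧ (⊥ : Submodule R M) ≤ q})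
  have h2 : D.d ↥(⊥ : Submodule R M) ((⊥ : Submodule R M).comap (⊥ : Submodule R M).subtype)
      ≤ D.d ↥(⊥ : Submodule R M) ⊤ := d_mono D _ _ le_top
  have h3 : D.d ↥(⊥ : Submodule R M) ⊤ = 0 := L_subsingleton D
  exact le_antisymm (by rw [← h3]; exact hle.trans h2) zero_le

theorem d_pair {M : Type u} [AddCommGroup M] [Module R M] (p c : Submodule R M)
    (h : IsCompl p c) (S : Submodule R M) (hS : S ≤ p) :
    D.d ↥p (S.comap p.subtype) = D.d M S := by
  set e := Submodule.prodEquivOfIsCompl p c h with hedef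
  have hiso := D.iso_invariant (↥p × ↥c) M e ((S.comap p.subtype).prod ⊥)
  have hmap : ((S.comap p.subtype).prod (⊥ : Submodule R ↥c)).map (e : (↥p × ↥c) →ₗ[R] M)
      = S := by
    ext w
    simp only [Submodule.mem_map, Submodule.mem_prod, Submodule.mem_bot, Submodule.mem_comap]
    constructor
    · rintro ⟨⟨a, b⟩, ⟨ha, hb⟩, rfl⟩
      have hb0 : b = 0 := hb
      have heab : e (a, b) = (a : M) + (b : M) := by
        rw [hedef]
        simp [Submodule.coe_prodEquivOfIsCompl]
      rw [show ((e : (↥p × ↥c) →ₗ[R] M) (a, b) : M) = e (a, b) from rfl, heab, hb0]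
      simpa using ha
    · intro hw
      refine ⟨(⟨w, hS hw⟩, 0), ⟨hw, rfl⟩, ?_⟩
      show e (⟨w, hS hw⟩, 0) = w
      rw [hedef]
      simp [Submodule.coe_prodEquivOfIsCompl]
  rw [hmap] at hiso
  rw [← hiso, D.d_prod, d_bot, add_zero]

theorem d_compl {M : Type u} [AddCommGroup M] [Module R M] {p c : Submodule R M}
    (h : IsCompl p c) : D.d M p = D.d ↥p ⊤ := by
  have := d_pair D p c h p le_rfl
  rw [Submodule.comap_subtype_self] at this
  exact this.symm

theorem L_prod (M N : Type u) [AddCommGroup M] [Module R M] [AddCommGroup N] [Module R N] :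
    D.d (M × N) ⊤ = D.d M ⊤ + D.d N ⊤ := by
  rw [← Submodule.prod_top]
  exact D.d_prod M N ⊤ ⊤

theorem L_pi : ∀ n : ℕ, D.d (Fin n → R) ⊤ = (n : ℝ≥0∞)
  | 0 => by
    haveI : Subsingleton (Fin 0 → R) := ⟨fun a b => funext fun i => i.elim0⟩
    rw [L_subsingleton D, Nat.cast_zero]
  | (n + 1) => by
    have e : (Fin (n + 1) → R) ≃ₗ[R] (Fin n → R) × R :=
      (piProdEquiv n 1).trans
        ((LinearEquiv.refl R (Fin n → R)).prodCongr (LinearEquiv.funUnique (Fin 1) R R))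
    rw [d_iso D e, L_prod, L_pi n, D.d_ring]
    push_cast
    ring

theorem d_fg_retract {F : Type u} [AddCommGroup F] [Module R F] (hF : AllRetract R F)
    {S : Submodule R F} (hS : S.FG) : D.d F S = D.d ↥S ⊤ := by
  obtain ⟨r, h1, h2⟩ := hF S hS
  exact d_compl D (isCompl_of_retract h1 h2)

theorem L_sup_disjoint {M : Type u} [AddCommGroup M] [Module R M] (p c : Submodule R M)
    (h : p ⊓ c = ⊥) : D.d ↥(p ⊔ c) ⊤ = D.d ↥p ⊤ + D.d ↥c ⊤ := by
  set q := p ⊔ c with hqdef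
  have hpq : p ≤ q := le_sup_left
  have hcq : c ≤ q := le_sup_right
  set p' : Submodule R ↥q := p.comap q.subtype with hp'def
  set c' : Submodule R ↥q := c.comap q.subtype with hc'def
  have hcompl : IsCompl p' c' := by
    constructor
    · rw [disjoint_iff]
      refine le_antisymm ?_ bot_le
      rintro x ⟨hx1, hx2⟩
      have hx : (x : M) ∈ p ⊓ c := ⟨hx1, hx2⟩
      rw [h] at hx
      exact Subtype.ext (by simpa using hx)
    · rw [codisjoint_iff]
      refine le_antisymm le_top ?_
      rintro ⟨x, hx⟩ _
      obtain ⟨y, hy, z, hz, hyz⟩ := Submodule.mem_sup.mp hx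
      have heq : (⟨x, hx⟩ : ↥q) = ⟨y, hpq hy⟩ + ⟨z, hcq hz⟩ := Subtype.ext (by simp [hyz])
      rw [heq]
      exact Submodule.add_mem_sup (show (⟨y, hpq hy⟩ : ↥q) ∈ p' from hy)
        (show (⟨z, hcq hz⟩ : ↥q) ∈ c' from hz)
  calc D.d ↥q ⊤ = D.d (↥p' × ↥c') ⊤ := (d_iso D (Submodule.prodEquivOfIsCompl p' c' hcompl)).symm
  _ = D.d ↥p' ⊤ + D.d ↥c' ⊤ := L_prod D _ _
  _ = D.d ↥p ⊤ + D.d ↥c ⊤ := by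
      rw [d_iso D (Submodule.comapSubtypeEquivOfLe hpq),
        d_iso D (Submodule.comapSubtypeEquivOfLe hcq)]

set_option maxHeartbeats 1000000 in
theorem d_modular {F : Type u} [AddCommGroup F] [Module R F] [Module.Projective R F]
    (hF : AllRetract R F) {A B : Submodule R F} (hA : A.FG) (hB : B.FG) :
    D.d F (A ⊔ B) + D.d F (A ⊓ B) = D.d F A + D.d F B := by
  have hAB : (A ⊓ B).FG := inf_fg hF hA hB
  obtain ⟨r, hr1, hr2⟩ := hF (A ⊓ B) hAB
  set C := A.map (LinearMap.id - r) with hCdef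
  have hCfg : C.FG := hA.map _
  have hCA : C ≤ A := by
    rintro _ ⟨a, ha, rfl⟩
    exact sub_mem ha (Submodule.mem_inf.mp (hr2 ⟨a, rfl⟩)).1
  have hrzero : ∀ x ∈ C, r x = 0 := by
    rintro _ ⟨a, ha, rfl⟩
    show r (a - r a) = 0
    rw [map_sub, hr1 (r a) (hr2 ⟨a, rfl⟩), sub_self]
  have disj1 : (A ⊓ B) ⊓ C = ⊥ := by
    refine le_antisymm ?_ bot_le
    rintro x ⟨hx1, hx2⟩
    have h1 : r x = x := hr1 x hx1
    have h2 : r x = 0 := hrzero x hx2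
    rw [Submodule.mem_bot, ← h1, h2]
  have sup1 : (A ⊓ B) ⊔ C = A := by
    refine le_antisymm (sup_le inf_le_left hCA) ?_
    intro a ha
    have heq : a = r a + (a - r a) := by abel
    rw [heq]
    exact Submodule.add_mem_sup (hr2 ⟨a, rfl⟩) ⟨a, ha, rfl⟩
  have disj2 : B ⊓ C = ⊥ := by
    refine le_antisymm ?_ bot_le
    rintro x ⟨hx1, hx2⟩
    have hxA : x ∈ A := hCA hx2
    have h1 : r x = x := hr1 x ⟨hxA, hx1⟩
    have h2 : r x = 0 := hrzero x hx2
    rw [Submodule.mem_bot, ← h1, h2]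
  have sup2 : B ⊔ C = A ⊔ B := by
    apply le_antisymm
    · exact sup_le le_sup_right (hCA.trans le_sup_left)
    · refine sup_le ?_ le_sup_left
      intro a ha
      have heq : a = r a + (a - r a) := by abel
      rw [heq]
      exact Submodule.add_mem_sup (Submodule.mem_inf.mp (hr2 ⟨a, rfl⟩)).2 ⟨a, ha, rfl⟩
  have e1 := L_sup_disjoint D (A ⊓ B) C disj1
  rw [sup1] at e1
  have e2 := L_sup_disjoint D B C disj2
  rw [sup2] at e2
  rw [d_fg_retract D hF (hA.sup hB), d_fg_retract D hF hAB, d_fg_retract D hF hA,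
    d_fg_retract D hF hB, e2, e1]
  ring

theorem d_sup_inf_limit {F : Type u} [AddCommGroup F] [Module R F] [Module.Projective R F]
    (hF : AllRetract R F) (P₀ K : Submodule R F) (hP₀ : P₀.FG) :
    D.d F (P₀ ⊔ K) + D.d F (P₀ ⊓ K) = D.d F K + D.d F P₀ := by
  haveI hne : Nonempty {K' : Submodule R F // K'.FG ∧ K' ≤ K} :=
    ⟨⟨⊥, Submodule.fg_bot, bot_le⟩⟩
  set g : {K' : Submodule R F // K'.FG ∧ K' ≤ K} → Submodule R F := fun i => P₀ ⊔ i.1 with hgdef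
  have hdir : Directed (· ≤ ·) g := by
    intro i j
    exact ⟨⟨i.1 ⊔ j.1, i.2.1.sup j.2.1, sup_le i.2.2 j.2.2⟩,
      sup_le_sup_left le_sup_left _, sup_le_sup_left le_sup_right _⟩
  have hsup : P₀ ⊔ K = ⨆ i, g i := by
    refine le_antisymm (sup_le ?_ ?_) (iSup_le fun i => sup_le_sup_left i.2.2 _)
    · exact le_iSup_of_le (⟨⊥, Submodule.fg_bot, bot_le⟩ :
        {K' : Submodule R F // K'.FG ∧ K' ≤ K}) le_sup_left
    · intro x hx
      refine Submodule.mem_iSup_of_mem (⟨Submodule.span R {x}, Submodule.fg_span_singleton x,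
        (Submodule.span_singleton_le_iff_mem x K).mpr hx⟩ :
        {K' : Submodule R F // K'.FG ∧ K' ≤ K}) ?_
      exact Submodule.mem_sup_right (Submodule.mem_span_singleton_self x)
  have h2 : D.d F (P₀ ⊔ K) = ⨆ i, D.d F (g i) := by
    refine le_antisymm ?_ (iSup_le fun i => d_mono D _ _ (sup_le_sup_left i.2.2 _))
    rw [D.continuity_sup F (P₀ ⊔ K)]
    refine iSup_le ?_
    rintro ⟨A, hAfg, hAle⟩
    have hAc := (Submodule.fg_iff_compact A).mp hAfg
    obtain ⟨-, ⟨i, rfl⟩, hAi⟩ :=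
      (CompleteLattice.isCompactElement_iff_le_of_directed_sSup_le _ A).mp hAc
        (Set.range g) (Set.range_nonempty g) (directedOn_range.mpr hdir)
        (by rw [sSup_range, ← hsup]; exact hAle)
    exact le_iSup_of_le i (d_mono D _ _ hAi)
  have h3 : D.d F (P₀ ⊓ K) = ⨆ i : {K' : Submodule R F // K'.FG ∧ K' ≤ K}, D.d F (P₀ ⊓ i.1) := by
    refine le_antisymm ?_ (iSup_le fun i => d_mono D _ _ (inf_le_inf_left _ i.2.2))
    rw [D.continuity_sup F (P₀ ⊓ K)]
    refine iSup_le ?_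
    rintro ⟨A, hAfg, hAle⟩
    refine le_iSup_of_le (⟨A, hAfg, hAle.trans inf_le_right⟩ :
      {K' : Submodule R F // K'.FG ∧ K' ≤ K}) ?_
    exact le_of_eq (congrArg _ (inf_eq_right.mpr (hAle.trans inf_le_left)).symm)
  have hcond : ∀ i j : {K' : Submodule R F // K'.FG ∧ K' ≤ K},
      ∃ l : {K' : Submodule R F // K'.FG ∧ K' ≤ K},
      D.d F (g i) + D.d F (P₀ ⊓ j.1) ≤ D.d F (g l) + D.d F (P₀ ⊓ l.1) := by
    intro i j
    refine ⟨⟨i.1 ⊔ j.1, i.2.1.sup j.2.1, sup_le i.2.2 j.2.2⟩, add_le_add ?_ ?_⟩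
    · exact d_mono D _ _ (sup_le_sup_left le_sup_left _)
    · exact d_mono D _ _ (inf_le_inf_left _ le_sup_right)
  rw [h2, h3, ENNReal.iSup_add_iSup hcond]
  have hpt : ∀ i : {K' : Submodule R F // K'.FG ∧ K' ≤ K},
      D.d F (g i) + D.d F (P₀ ⊓ i.1) = D.d F i.1 + D.d F P₀ := by
    intro i
    rw [hgdef]
    show D.d F (P₀ ⊔ i.1) + D.d F (P₀ ⊓ i.1) = D.d F i.1 + D.d F P₀
    rw [d_modular D hF hP₀ i.2.1]
    ring
  rw [iSup_congr hpt, ← ENNReal.iSup_add, ← D.continuity_sup F K]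

theorem d_fg_of_finite (hvnr : ∀ x : R, ∃ y : R, x * y * x = x) {Q : Type u} [AddCommGroup Q]
    [Module R Q] [Module.Finite R Q] (P : Submodule R Q) (hP : P.FG) :
    D.d Q P = D.d ↥P ⊤ := by
  obtain ⟨k, x, hx⟩ := Submodule.fg_iff_exists_fin_generating_family.mp hP
  obtain ⟨m, z, hz⟩ :=
    Submodule.fg_iff_exists_fin_generating_family.mp (Module.finite_def.mp ‹Module.Finite R Q›)
  set lcx : (Fin k → R) →ₗ[R] Q := Fintype.linearCombination R x with hlcx
  set lcz : (Fin m → R) →ₗ[R] Q := Fintype.linearCombination R z with hlcz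
  set π : ((Fin k → R) × (Fin m → R)) →ₗ[R] Q := lcx.coprod lcz with hπdef
  have hrange : LinearMap.range π = ⊤ := by
    rw [hπdef, LinearMap.range_coprod, hlcx, hlcz, Fintype.range_linearCombination,
      Fintype.range_linearCombination, hx, hz, sup_top_eq]
  have hπ : Function.Surjective π := LinearMap.range_eq_top.mp hrange
  set K := LinearMap.ker π with hKdef
  set P₀ := LinearMap.range (LinearMap.inl R (Fin k → R) (Fin m → R)) with hP₀def
  have hP₀fg : P₀.FG := by
    rw [hP₀def, ← Submodule.map_top]
    exact (Module.finite_def.mp (inferInstance : Module.Finite R (Fin k → R))).map _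
  have hmapP₀ : P₀.map π = P := by
    rw [hP₀def, ← LinearMap.range_comp, LinearMap.coprod_inl, hlcx,
      Fintype.range_linearCombination, hx]
  have hcompl : IsCompl P₀ (LinearMap.range (LinearMap.inr R (Fin k → R) (Fin m → R))) :=
    LinearMap.isCompl_range_inl_inr
  have eqvP₀ : (Fin k → R) ≃ₗ[R] ↥P₀ :=
    LinearEquiv.ofInjective (LinearMap.inl R (Fin k → R) (Fin m → R)) LinearMap.inl_injective
  have hFret : AllRetract R ((Fin k → R) × (Fin m → R)) := allRetract_prodPi hvnr k m
  have LF : D.d ((Fin k → R) × (Fin m → R)) ⊤ = (k : ℝ≥0∞) + m := by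
    rw [L_prod, L_pi, L_pi]
  have E1 : D.d ((Fin k → R) × (Fin m → R)) ⊤ = D.d ((Fin k → R) × (Fin m → R)) K + D.d Q ⊤ := by
    rw [D.additivity ((Fin k → R) × (Fin m → R)) K]
    congr 1
    exact d_iso D (π.quotKerEquivOfSurjective hπ)
  have E2 : D.d ((Fin k → R) × (Fin m → R)) ⊤ =
      D.d ((Fin k → R) × (Fin m → R)) (P₀ ⊔ K) + D.d (Q ⧸ P) ⊤ := by
    rw [D.additivity ((Fin k → R) × (Fin m → R)) (P₀ ⊔ K)]
    congr 1
    have hker : LinearMap.ker (P.mkQ ∘ₗ π) = P₀ ⊔ K := by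
      rw [LinearMap.ker_comp, Submodule.ker_mkQ]
      refine le_antisymm ?_ (sup_le ?_ ?_)
      · intro v hv
        have hvP : π v ∈ P := hv
        rw [← hmapP₀] at hvP
        obtain ⟨w, hw, hww⟩ := hvP
        have hvw : v - w ∈ K := by
          show π (v - w) = 0
          rw [map_sub, hww, sub_self]
        have heq : v = w + (v - w) := by abel
        rw [heq]
        exact Submodule.add_mem_sup hw hvw
      · intro v hv
        show π v ∈ P
        rw [← hmapP₀]
        exact Submodule.mem_map_of_mem hv
      · intro v hv
        show π v ∈ P
        rw [show π v = 0 from hv]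
        exact P.zero_mem
    have hsurj2 : Function.Surjective (P.mkQ ∘ₗ π) := by
      rw [LinearMap.coe_comp]
      exact (P.mkQ_surjective).comp hπ
    exact d_iso D ((Submodule.quotEquivOfEq _ _ hker.symm).trans
      ((P.mkQ ∘ₗ π).quotKerEquivOfSurjective hsurj2))
  have E3 : (k : ℝ≥0∞) = D.d ((Fin k → R) × (Fin m → R)) (P₀ ⊓ K) + D.d ↥P ⊤ := by
    have hadd := D.additivity ↥P₀ (K.comap P₀.subtype)
    have h1 : D.d ↥P₀ ⊤ = (k : ℝ≥0∞) := by rw [← d_iso D eqvP₀, L_pi]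
    have hcc : K.comap P₀.subtype = (P₀ ⊓ K).comap P₀.subtype := by
      ext v
      simp only [Submodule.mem_comap, Submodule.mem_inf]
      exact ⟨fun hv => ⟨v.2, hv⟩, fun hv => hv.2⟩
    have h3 : D.d ↥P₀ ((P₀ ⊓ K).comap P₀.subtype) = D.d ((Fin k → R) × (Fin m → R)) (P₀ ⊓ K) :=
      d_pair D P₀ _ hcompl _ inf_le_left
    have hmem : ∀ c : ↥P₀, (π ∘ₗ P₀.subtype) c ∈ P := fun w => by
      rw [← hmapP₀]
      exact Submodule.mem_map_of_mem w.2
    set τ : ↥P₀ →ₗ[R] ↥P := LinearMap.codRestrict P (π ∘ₗ P₀.subtype) hmem with hτdef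
    have hτsurj : Function.Surjective τ := by
      rintro ⟨q, hq⟩
      rw [← hmapP₀] at hq
      obtain ⟨w, hw, hww⟩ := hq
      exact ⟨⟨w, hw⟩, Subtype.ext hww⟩
    have hτker : LinearMap.ker τ = K.comap P₀.subtype := by
      rw [hτdef, LinearMap.ker_codRestrict, LinearMap.ker_comp, hKdef]
    have h4 : D.d (↥P₀ ⧸ (K.comap P₀.subtype)) ⊤ = D.d ↥P ⊤ :=
      d_iso D ((Submodule.quotEquivOfEq _ _ hτker.symm).trans (τ.quotKerEquivOfSurjective hτsurj))
    rw [← h1, hadd, h4, hcc, h3]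
  have E4 := d_sup_inf_limit D hFret P₀ K hP₀fg
  have hP0val : D.d ((Fin k → R) × (Fin m → R)) P₀ = (k : ℝ≥0∞) := by
    rw [d_fg_retract D hFret hP₀fg, ← d_iso D eqvP₀, L_pi]
  rw [hP0val] at E4
  have E0 := D.additivity Q P
  -- arithmetic
  set a := D.d Q P
  set b := D.d ↥P ⊤
  set w := D.d ((Fin k → R) × (Fin m → R)) K
  set u := D.d ((Fin k → R) × (Fin m → R)) (P₀ ⊔ K)
  set v := D.d ((Fin k → R) × (Fin m → R)) (P₀ ⊓ K)
  set c₃ := D.d (Q ⧸ P) ⊤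
  have ht : D.d ((Fin k → R) × (Fin m → R)) ⊤ ≠ ⊤ := by
    rw [LF]
    exact ENNReal.add_ne_top.mpr ⟨ENNReal.natCast_ne_top k, ENNReal.natCast_ne_top m⟩
  have hw : w ≠ ⊤ := by
    refine ne_top_of_le_ne_top ht ?_
    rw [E1]
    exact le_self_add
  have hv : v ≠ ⊤ := by
    refine ne_top_of_le_ne_top (ENNReal.natCast_ne_top k) ?_
    rw [E3]
    exact le_self_add
  have hc₃ : c₃ ≠ ⊤ := by
    refine ne_top_of_le_ne_top ht ?_
    rw [E2]
    exact le_add_self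
  have hE : w + v + c₃ ≠ ⊤ :=
    ENNReal.add_ne_top.mpr ⟨ENNReal.add_ne_top.mpr ⟨hw, hv⟩, hc₃⟩
  have key : a + (w + v + c₃) = b + (w + v + c₃) := by
    have lhs : a + (w + v + c₃) = D.d ((Fin k → R) × (Fin m → R)) ⊤ + v := by
      have h5 : a + (w + v + c₃) = (w + (a + c₃)) + v := by ring
      rw [h5, ← E0, ← E1]
    have rhs : b + (w + v + c₃) = D.d ((Fin k → R) × (Fin m → R)) ⊤ + v := by
      have h5 : b + (w + v + c₃) = (v + b) + w + c₃ := by ring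
      rw [h5, ← E3]
      have h6 : (k : ℝ≥0∞) + w + c₃ = (w + (k : ℝ≥0∞)) + c₃ := by ring
      rw [h6, ← E4]
      have h7 : (u + v) + c₃ = (u + c₃) + v := by ring
      rw [h7, ← E2]
    rw [lhs, rhs]
  exact (ENNReal.add_left_inj hE).mp key

theorem d_fg (hvnr : ∀ x : R, ∃ y : R, x * y * x = x) {M : Type u} [AddCommGroup M] [Module R M]
    (p : Submodule R M) (hp : p.FG) : D.d M p = D.d ↥p ⊤ := by
  haveI : Nonempty {q : Submodule R M // q.FG ∧ p ≤ q} := ⟨⟨p, hp, le_rfl⟩⟩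
  rw [D.continuity_inf M p hp]
  have hterm : ∀ q : {q : Submodule R M // q.FG ∧ p ≤ q},
      D.d ↥q.1 (p.comap q.1.subtype) = D.d ↥p ⊤ := by
    rintro ⟨q, hq, hpq⟩
    haveI : Module.Finite R ↥q := Module.Finite.iff_fg.mpr hq
    have hfg : (p.comap q.subtype).FG := by
      apply Submodule.fg_of_fg_map_injective q.subtype (Submodule.injective_subtype q)
      rw [Submodule.map_comap_subtype, inf_eq_right.mpr hpq]
      exact hp
    rw [d_fg_of_finite D hvnr _ hfg]
    exact d_iso D (Submodule.comapSubtypeEquivOfLe hpq)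
  rw [iInf_congr hterm, iInf_const]

theorem d_eq (hvnr : ∀ x : R, ∃ y : R, x * y * x = x) {M : Type u} [AddCommGroup M] [Module R M]
    (p : Submodule R M) : D.d M p = D.d ↥p ⊤ := by
  rw [D.continuity_sup M p, D.continuity_sup ↥p ⊤]
  apply le_antisymm
  · refine iSup_le ?_
    rintro ⟨A, hA, hAp⟩
    have hfg : (A.comap p.subtype).FG := by
      apply Submodule.fg_of_fg_map_injective p.subtype (Submodule.injective_subtype p)
      rw [Submodule.map_comap_subtype, inf_eq_right.mpr hAp]
      exact hA
    have h1 : D.d M A = D.d ↥A ⊤ := d_fg D hvnr A hA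
    have h2 : D.d ↥p (A.comap p.subtype) = D.d ↥A ⊤ := by
      rw [d_fg D hvnr _ hfg]
      exact d_iso D (Submodule.comapSubtypeEquivOfLe hAp)
    calc D.d M A = D.d ↥p (A.comap p.subtype) := by rw [h1, h2]
    _ ≤ _ := le_iSup_of_le ⟨A.comap p.subtype, hfg, le_top⟩ le_rfl
  · refine iSup_le ?_
    rintro ⟨B, hB, -⟩
    have h1 : D.d ↥p B = D.d ↥B ⊤ := d_fg D hvnr B hB
    have h2 : D.d M (B.map p.subtype) = D.d ↥(B.map p.subtype) ⊤ := d_fg D hvnr _ (hB.map _)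
    have h3 : D.d ↥B ⊤ = D.d ↥(B.map p.subtype) ⊤ :=
      d_iso D (Submodule.equivMapOfInjective p.subtype (Submodule.injective_subtype p) B)
    calc D.d ↥p B = D.d M (B.map p.subtype) := by rw [h1, h3, ← h2]
    _ ≤ _ := le_iSup_of_le ⟨B.map p.subtype, hB.map _, Submodule.map_subtype_le p B⟩ le_rfl

end SylvAux

/-- If `R` is a von Neumann regular unital ring, then for every
bivariant Sylvester module rank function `dim(·|·)` for `R`, the function
`M ↦ dim(M) := dim(M|M)` is a normalized length function for `R`. -/
theorem bivariantSylvesterRank_isLengthFunction_of_vonNeumannRegular (R : Type u) [Ring R]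
    (hvnr : ∀ x : R, ∃ y : R, x * y * x = x)
    (dim : BivariantSylvesterRank R) :
    IsNormalizedLengthFunction R (fun M _ _ => dim.d M ⊤) := by
  refine ⟨dim.d_zero, dim.d_ring, ?_, ?_⟩
  · intro M _ _
    show dim.d M ⊤ = ⨆ (p : {p : Submodule R M // p.FG}), dim.d ↥p.1 ⊤
    rw [dim.continuity_sup M ⊤]
    apply le_antisymm
    · refine iSup_le ?_
      rintro ⟨p, hp, -⟩
      rw [SylvAux.d_fg dim hvnr p hp]
      exact le_iSup_of_le ⟨p, hp⟩ le_rfl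
    · refine iSup_le ?_
      rintro ⟨p, hp⟩
      rw [← SylvAux.d_fg dim hvnr p hp]
      exact le_iSup_of_le ⟨p, hp, le_top⟩ le_rfl
  · intro M₁ M₂ M₃ _ _ _ _ _ _ f g hf hfg hg
    show dim.d M₂ ⊤ = dim.d M₁ ⊤ + dim.d M₃ ⊤
    have hker : LinearMap.ker g = LinearMap.range f := LinearMap.exact_iff.mp hfg
    have h2 : dim.d M₂ (LinearMap.range f) = dim.d M₁ ⊤ := by
      rw [SylvAux.d_eq dim hvnr]
      exact (SylvAux.d_iso dim (LinearEquiv.ofInjective f hf)).symm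
    have h3 : dim.d (M₂ ⧸ LinearMap.range f) ⊤ = dim.d M₃ ⊤ :=
      SylvAux.d_iso dim ((Submodule.quotEquivOfEq _ _ hker.symm).trans
        (g.quotKerEquivOfSurjective hg))
    rw [dim.additivity M₂ (LinearMap.range f), h2, h3]
end
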